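/- With notation as above (p^m ≡ 3 mod 4, α a non-square, β ≠ 0, γ^4 = -4α₀, α₀^{p^s} = α), a monic quadratic x² + c₁x + d₁ ∈ F_{p^m}[x] is a non-unit in 𝓡 = R[x]/⟨x^{4p^s}-(α+βu)⟩ if and only if (c₁, d₁) = (γ, γ²/2) or (c₁, d₁) = (-γ, γ²/2). -/

import Mathlib

/-! Elements of `𝓡` lying over `u R[x]` are nilpotent, so a polynomial is a unit in `𝓡` iff
its reduction modulo `u` is coprime to `x^{4p^s} - α` over `F_{p^m}`. By Frobenius and Sophie
Germain's identity, `x^{4p^s} - α = ((x² + γx + γ²/2)(x² - γx + γ²/2))^{p^s}`, and both factors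
are irreducible: their discriminant is `-γ²`, a non-square because `p^m ≡ 3 mod 4` makes `-1` a
non-square. A monic quadratic shares a factor with this power exactly when it is one of the two
factors. -/

open Polynomial

/-- The chain ring `R = F_{p^m}[u]/⟨u²⟩`. -/
abbrev Ru (K : Type) [Field K] : Type := K[X] ⧸ Ideal.span {(X : K[X]) ^ 2}

noncomputable instance Ru.instCommRing (K : Type) [Field K] : CommRing (Ru K) :=
  Ideal.Quotient.commRing _

/-- The element `u` of `R`. -/
noncomputable def uR (K : Type) [Field K] : Ru K :=
  Ideal.Quotient.mk _ (X : K[X])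

/-- The natural inclusion of `F_{p^m}` into `R`. -/
noncomputable def tR (K : Type) [Field K] (a : K) : Ru K :=
  Ideal.Quotient.mk _ (C a : K[X])

/-- The ambient ring `R[x]/⟨xⁿ - λ⟩` of `λ`-constacyclic codes of length `n` over `R`. -/
abbrev RC (K : Type) [Field K] (lam : Ru K) (n : ℕ) : Type :=
  (Ru K)[X] ⧸ Ideal.span {(X : (Ru K)[X]) ^ n - C lam}

/-- The canonical projection `R[x] → R[x]/⟨xⁿ - λ⟩`. -/
noncomputable def mkC (K : Type) [Field K] (lam : Ru K) (n : ℕ) :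
    (Ru K)[X] →+* RC K lam n :=
  Ideal.Quotient.mk _

section NilpotentKernel

variable {A B : Type*} [CommRing A] [CommRing B]

theorem RingHom.isUnit_map_iff_of_ker_le_nilradical (φ : A →+* B) (hφ : Function.Surjective φ)
    (hker : RingHom.ker φ ≤ nilradical A) (a : A) : IsUnit (φ a) ↔ IsUnit a := by
  refine ⟨fun ha => ?_, IsUnit.map φ⟩
  obtain ⟨b, hb⟩ := hφ ↑ha.unit⁻¹
  have hnil : IsNilpotent (a * b - 1) := hker (by simp [hb])
  have hab : IsUnit (a * b) := by simpa using hnil.isUnit_one_add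
  exact isUnit_of_mul_isUnit_left hab

theorem Polynomial.ker_mapRingHom_le_nilradical {φ : A →+* B}
    (hker : RingHom.ker φ ≤ nilradical A) : RingHom.ker (mapRingHom φ) ≤ nilradical A[X] := by
  rw [ker_mapRingHom]
  intro P hP
  exact Polynomial.isNilpotent_iff.mpr fun i => hker (Ideal.mem_map_C_iff.mp hP i)

theorem isUnit_mk_span_map_iff (φ : A →+* B) (hφ : Function.Surjective φ)
    (hker : RingHom.ker φ ≤ nilradical A) (f g : A[X]) :
    IsUnit (Ideal.Quotient.mk (Ideal.span {f.map φ}) (g.map φ)) ↔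
      IsUnit (Ideal.Quotient.mk (Ideal.span {f}) g) := by
  have hle : Ideal.span {f} ≤ (Ideal.span {f.map φ}).comap (mapRingHom φ) := by
    rw [Ideal.span_le, Set.singleton_subset_iff]
    exact Ideal.mem_span_singleton_self _
  set Ψ := Ideal.quotientMap _ (mapRingHom φ) hle
  have hΨker : RingHom.ker Ψ ≤ nilradical _ := by
    intro x hx
    obtain ⟨g, rfl⟩ := Ideal.Quotient.mk_surjective x
    rw [RingHom.mem_ker, Ideal.quotientMap_mk, Ideal.Quotient.eq_zero_iff_mem,
      Ideal.mem_span_singleton] at hx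
    obtain ⟨c', hc'⟩ := hx
    obtain ⟨c, rfl⟩ := map_surjective φ hφ c'
    have hlift : g - f * c ∈ RingHom.ker (mapRingHom φ) := by
      rw [RingHom.mem_ker, map_sub, map_mul, hc', coe_mapRingHom, sub_self]
    have hmk : Ideal.Quotient.mk (Ideal.span {f}) g =
        Ideal.Quotient.mk (Ideal.span {f}) (g - f * c) := by
      rw [Ideal.Quotient.eq, sub_sub_cancel]
      exact Ideal.mul_mem_right _ _ (Ideal.mem_span_singleton_self f)
    rw [mem_nilradical, hmk]
    exact (mem_nilradical.mp (ker_mapRingHom_le_nilradical hker hlift)).map _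
  simpa [Ψ] using Ψ.isUnit_map_iff_of_ker_le_nilradical
    (Ideal.quotientMap_surjective (map_surjective φ hφ)) hΨker (Ideal.Quotient.mk _ g)

end NilpotentKernel

theorem Ideal.Quotient.isUnit_mk_span_singleton_iff {A : Type*} [CommRing A] (f g : A) :
    IsUnit (Ideal.Quotient.mk (Ideal.span {f}) g) ↔ IsCoprime g f := by
  rw [isUnit_iff_exists_inv]
  constructor
  · rintro ⟨b', hb'⟩
    obtain ⟨b, rfl⟩ := Ideal.Quotient.mk_surjective b'
    rw [← map_mul, ← map_one (Ideal.Quotient.mk _), Ideal.Quotient.eq,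
      Ideal.mem_span_singleton] at hb'
    obtain ⟨c, hc⟩ := hb'
    exact ⟨b, -c, by linear_combination hc⟩
  · rintro ⟨b, c, hbc⟩
    refine ⟨Ideal.Quotient.mk _ b, ?_⟩
    rw [← map_mul, ← map_one (Ideal.Quotient.mk _), Ideal.Quotient.eq,
      Ideal.mem_span_singleton]
    exact ⟨-c, by linear_combination hbc⟩

noncomputable def Ru.residue (K : Type) [Field K] : Ru K →+* K :=
  Ideal.Quotient.lift _ (evalRingHom 0) fun a ha => by
    obtain ⟨b, rfl⟩ := Ideal.mem_span_singleton.mp ha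
    simp

@[simp] lemma Ru.residue_tR (K : Type) [Field K] (a : K) : Ru.residue K (tR K a) = a := by
  simp [Ru.residue, tR]

@[simp] lemma Ru.residue_uR (K : Type) [Field K] : Ru.residue K (uR K) = 0 := by
  simp [Ru.residue, uR]

lemma Ru.ker_residue_le_nilradical (K : Type) [Field K] :
    RingHom.ker (Ru.residue K) ≤ nilradical (Ru K) := by
  intro x hx
  obtain ⟨q, rfl⟩ := Ideal.Quotient.mk_surjective x
  have hXq : X ∣ q := by
    rw [X_dvd_iff, coeff_zero_eq_eval_zero]
    simpa [Ru.residue] using hx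
  refine mem_nilradical.mpr ⟨2, ?_⟩
  rw [← map_pow, Ideal.Quotient.eq_zero_iff_mem, Ideal.mem_span_singleton]
  exact pow_dvd_pow_of_dvd hXq 2

theorem isUnit_mkC_iff_isCoprime (K : Type) [Field K] (lam : Ru K) (n : ℕ) (g : (Ru K)[X]) :
    IsUnit (mkC K lam n g) ↔
      IsCoprime (g.map (Ru.residue K)) (X ^ n - C (Ru.residue K lam)) := by
  have hres : Function.Surjective (Ru.residue K) := fun a => ⟨tR K a, Ru.residue_tR K a⟩
  rw [mkC, ← isUnit_mk_span_map_iff _ hres (Ru.ker_residue_le_nilradical K),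
    Ideal.Quotient.isUnit_mk_span_singleton_iff]
  simp

section Quadratic

variable {K : Type*} [Field K]

lemma natDegree_X_sq_add_C_mul_X_add_C (b c : K) : (X ^ 2 + C b * X + C c).natDegree = 2 := by
  compute_degree!

lemma monic_X_sq_add_C_mul_X_add_C (b c : K) : (X ^ 2 + C b * X + C c).Monic := by
  monicity!

lemma X_sq_add_C_mul_X_add_C_inj {b c b' c' : K} :
    X ^ 2 + C b * X + C c = X ^ 2 + C b' * X + C c' ↔ b = b' ∧ c = c' := by
  refine ⟨fun h => ⟨?_, ?_⟩, by rintro ⟨rfl, rfl⟩; rfl⟩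
  · simpa using congrArg (coeff · 1) h
  · simpa using congrArg (coeff · 0) h

lemma irreducible_X_sq_add_C_mul_X_add_C {b c : K} (h : ¬ IsSquare (discrim 1 b c)) :
    Irreducible (X ^ 2 + C b * X + C c) := by
  rw [irreducible_iff_roots_eq_zero_of_degree_le_three (by rw [natDegree_X_sq_add_C_mul_X_add_C])
    (by rw [natDegree_X_sq_add_C_mul_X_add_C]; norm_num), Multiset.eq_zero_iff_forall_notMem]
  intro r hr
  have hroot : 1 * (r * r) + b * r + c = 0 := by
    simpa [sq] using (mem_roots'.mp hr).2
  exact h ⟨_, (discrim_eq_sq_of_quadratic_eq_zero hroot).trans (sq _)⟩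

lemma not_isCoprime_X_sq_add_C_mul_X_add_C_iff {b c b' c' : K}
    (hirr : Irreducible (X ^ 2 + C b' * X + C c')) :
    ¬ IsCoprime (X ^ 2 + C b * X + C c) (X ^ 2 + C b' * X + C c') ↔ b = b' ∧ c = c' := by
  rw [isCoprime_comm, hirr.coprime_iff_not_dvd, not_not, ← X_sq_add_C_mul_X_add_C_inj]
  refine ⟨fun hdvd => ?_, fun h => h ▸ dvd_rfl⟩
  refine eq_of_monic_of_dvd_of_natDegree_le (monic_X_sq_add_C_mul_X_add_C _ _)
    (monic_X_sq_add_C_mul_X_add_C _ _) hdvd ?_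
  rw [natDegree_X_sq_add_C_mul_X_add_C, natDegree_X_sq_add_C_mul_X_add_C]

/-- Sophie Germain's identity `x⁴ + 4y⁴ = (x² + 2xy + 2y²)(x² - 2xy + 2y²)` with `γ = 2y`. -/
lemma X_pow_four_sub_C_eq_mul {α₀ γ : K} (h2 : (2 : K) ≠ 0) (hγ : γ ^ 4 = -4 * α₀) :
    X ^ 4 - C α₀ =
      (X ^ 2 + C γ * X + C (γ ^ 2 / 2)) * (X ^ 2 + C (-γ) * X + C (γ ^ 2 / 2)) := by
  have hsum : C (γ ^ 2 / 2) + C (γ ^ 2 / 2) = C γ * C γ := by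
    rw [← C_mul, ← C_add]; congr 1; field_simp; ring
  have hprod : C (γ ^ 2 / 2) * C (γ ^ 2 / 2) = -C α₀ := by
    rw [← C_mul, ← C_neg]; congr 1; field_simp; linear_combination hγ
  rw [C_neg]
  linear_combination -(X : K[X]) ^ 2 * hsum - hprod

lemma not_isSquare_discrim_of_not_isSquare_neg_one (hsq : ¬ IsSquare (-1 : K)) {γ : K}
    (hγ : γ ≠ 0) (h2 : (2 : K) ≠ 0) (e : K) (he : e ^ 2 = γ ^ 2) :
    ¬ IsSquare (discrim 1 e (γ ^ 2 / 2)) := by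
  have hdisc : discrim 1 e (γ ^ 2 / 2) = -1 * γ ^ 2 := by
    rw [discrim, he]; field_simp; ring
  rw [hdisc]
  intro h
  apply hsq
  simpa [hγ] using h.div (IsSquare.sq γ)

end Quadratic

theorem not_isCoprime_X_pow_sub_C_iff {K : Type*} [Field K] {p : ℕ} [hp : Fact p.Prime]
    [CharP K p] (hsq : ¬ IsSquare (-1 : K)) (h2 : (2 : K) ≠ 0) {α₀ γ : K} (hγ0 : γ ≠ 0)
    (hγ : γ ^ 4 = -4 * α₀) (s : ℕ) (c₁ d₁ : K) :
    ¬ IsCoprime (X ^ 2 + C c₁ * X + C d₁) (X ^ (4 * p ^ s) - C (α₀ ^ p ^ s)) ↔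
      (c₁ = γ ∧ d₁ = γ ^ 2 / 2) ∨ (c₁ = -γ ∧ d₁ = γ ^ 2 / 2) := by
  have hfrob : X ^ (4 * p ^ s) - C (α₀ ^ p ^ s) = (X ^ 4 - C α₀ : K[X]) ^ p ^ s := by
    rw [C_pow, mul_comm, pow_mul', sub_pow_char_pow]
  have hirr (e : K) (he : e ^ 2 = γ ^ 2) : Irreducible (X ^ 2 + C e * X + C (γ ^ 2 / 2)) :=
    irreducible_X_sq_add_C_mul_X_add_C
      (not_isSquare_discrim_of_not_isSquare_neg_one hsq hγ0 h2 e he)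
  rw [hfrob, X_pow_four_sub_C_eq_mul h2 hγ, IsCoprime.pow_right_iff (pow_pos hp.out.pos s),
    IsCoprime.mul_right_iff, not_and_or]
  exact or_congr (not_isCoprime_X_sq_add_C_mul_X_add_C_iff (hirr γ rfl))
    (not_isCoprime_X_sq_add_C_mul_X_add_C_iff (hirr (-γ) (neg_sq γ)))

theorem stmt11 (p s m : ℕ) (hp : p.Prime)
    (K : Type) [Field K] [Fintype K] (hK : Fintype.card K = p ^ m)
    (h3 : p ^ m % 4 = 3) (α β : K) (hα : α ≠ 0)
    (α₀ : K) (hα₀ : α₀ ^ p ^ s = α) (γ : K) (hγ : γ ^ 4 = -4 * α₀)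
    (c₁ d₁ : K) :
    ¬ IsUnit (mkC K (tR K α + tR K β * uR K) (4 * p ^ s)
        (X ^ 2 + C (tR K c₁) * X + C (tR K d₁))) ↔
      (c₁ = γ ∧ d₁ = γ ^ 2 / 2) ∨ (c₁ = -γ ∧ d₁ = γ ^ 2 / 2) := by
  have : Fact p.Prime := ⟨hp⟩
  have : CharP K p := charP_of_card_eq_prime_pow hK
  have h2 : (2 : K) ≠ 0 := Ring.two_ne_zero fun h => by
    have := FiniteField.even_card_iff_char_two.mp h
    omega
  have hsq : ¬ IsSquare (-1 : K) := fun h => FiniteField.isSquare_neg_one_iff.mp h (hK ▸ h3)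
  have hα₀0 : α₀ ≠ 0 := ne_zero_pow (pow_ne_zero s hp.ne_zero) (hα₀ ▸ hα)
  have hγ0 : γ ≠ 0 := by
    refine ne_zero_pow four_ne_zero (hγ ▸ mul_ne_zero ?_ hα₀0)
    rw [show (-4 : K) = -(2 * 2) by norm_num]
    exact neg_ne_zero.mpr (mul_ne_zero h2 h2)
  rw [isUnit_mkC_iff_isCoprime, ← not_isCoprime_X_pow_sub_C_iff hsq h2 hγ0 hγ s c₁ d₁, hα₀]
  simp
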